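/- If G is a Roman graph of order n and H is any graph, then γ_R(G □ H) ≤ 2n·(γ_R(H) − γ(H)) + 2γ(G)·(2γ(H) − γ_R(H)). -/

import Mathlib

open Finset

/-- A set `S` is a dominating set of `G` if every vertex outside `S` has a neighbor in `S`. -/
def IsDominatingSet {V : Type*} (G : SimpleGraph V) (S : Set V) : Prop :=
  ∀ v, v ∉ S → ∃ u ∈ S, G.Adj u v

/-- The domination number `γ(G)`. -/
noncomputable def domNum {V : Type*} [Fintype V] (G : SimpleGraph V) : ℕ :=
  sInf {n | ∃ S : Finset V, IsDominatingSet G ↑S ∧ S.card = n}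

/-- A Roman dominating function: values in {0,1,2}, every vertex of value 0 has a
neighbor of value 2. -/
def IsRDF {V : Type*} (G : SimpleGraph V) (f : V → ℕ) : Prop :=
  (∀ v, f v ≤ 2) ∧ ∀ v, f v = 0 → ∃ u, G.Adj u v ∧ f u = 2

/-- The Roman domination number `γ_R(G)`. -/
noncomputable def romanDomNum {V : Type*} [Fintype V] (G : SimpleGraph V) : ℕ :=
  sInf {n | ∃ f : V → ℕ, IsRDF G f ∧ ∑ v, f v = n}

/-- The strong product of graphs. -/
def strongProd {V W : Type*} (G : SimpleGraph V) (H : SimpleGraph W) :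
    SimpleGraph (V × W) where
  Adj x y := x ≠ y ∧ (x.1 = y.1 ∨ G.Adj x.1 y.1) ∧ (x.2 = y.2 ∨ H.Adj x.2 y.2)
  symm := ⟨fun x y => by
    rintro ⟨h, h1, h2⟩
    refine ⟨h.symm, ?_, ?_⟩
    · cases h1 with
      | inl h => exact Or.inl h.symm
      | inr h => exact Or.inr h.symm
    · cases h2 with
      | inl h => exact Or.inl h.symm
      | inr h => exact Or.inr h.symm⟩
  loopless := ⟨fun x => by simp⟩

/-- `G` has an efficient dominating set: a dominating set whose elements have
pairwise disjoint closed neighborhoods. -/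
def HasEfficientDomSet {V : Type*} (G : SimpleGraph V) : Prop :=
  ∃ S : Finset V, IsDominatingSet G ↑S ∧
    ∀ u ∈ S, ∀ v ∈ S, u ≠ v →
      Disjoint (insert u (G.neighborSet u)) (insert v (G.neighborSet v))

/-!
Take a minimum Roman dominating function `f` of `H`, with `V₁ = f⁻¹(1)` and `V₂ = f⁻¹(2)`, and a
minimum dominating set `D` of `G`. Assigning `2` to `V × V₂` and to `D × V₁` Roman-dominates
`G □ H`: a vertex `(u, w)` with `f w = 0` sees `(u, w')` for a neighbour `w' ∈ V₂` of `w`, and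
one with `w ∈ V₁`, `u ∉ D` sees `(u', w)` for a neighbour `u' ∈ D` of `u`. This has weight
`2n|V₂| + 2γ(G)|V₁|`, which differs from the claimed bound by
`(2n - 4γ(G)) (|V₁| + |V₂| - γ(H))`. Both factors are nonnegative: `V₁ ∪ V₂` dominates `H`, and
`2γ(G) = γ_R(G) ≤ n` since `G` is Roman.
-/

theorem isRDF_one {V : Type*} (G : SimpleGraph V) : IsRDF G (fun _ => 1) :=
  ⟨fun _ => one_le_two, fun _ h => absurd h one_ne_zero⟩

section Domination

variable {V : Type*} [Fintype V] (G : SimpleGraph V)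

theorem exists_isDominatingSet_card_eq_domNum :
    ∃ S : Finset V, IsDominatingSet G ↑S ∧ S.card = domNum G :=
  Nat.sInf_mem (s := {n | ∃ S : Finset V, IsDominatingSet G ↑S ∧ S.card = n})
    ⟨_, univ, fun _ hv => absurd (coe_univ (α := V) ▸ Set.mem_univ _) hv, rfl⟩

theorem domNum_le_card_of_isDominatingSet {S : Finset V} (hS : IsDominatingSet G ↑S) :
    domNum G ≤ S.card :=
  Nat.sInf_le ⟨S, hS, rfl⟩

theorem exists_isRDF_sum_eq_romanDomNum :
    ∃ f : V → ℕ, IsRDF G f ∧ ∑ v, f v = romanDomNum G :=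
  Nat.sInf_mem (s := {n | ∃ f : V → ℕ, IsRDF G f ∧ ∑ v, f v = n}) ⟨_, _, isRDF_one G, rfl⟩

theorem romanDomNum_le_sum {f : V → ℕ} (hf : IsRDF G f) : romanDomNum G ≤ ∑ v, f v :=
  Nat.sInf_le ⟨f, hf, rfl⟩

theorem romanDomNum_le_card : romanDomNum G ≤ Fintype.card V := by
  simpa using romanDomNum_le_sum G (isRDF_one G)

theorem two_mul_domNum_le_card_of_roman (hRoman : romanDomNum G = 2 * domNum G) :
    2 * domNum G ≤ Fintype.card V :=
  hRoman ▸ romanDomNum_le_card G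

variable {G}

theorem IsRDF.sum_eq {f : V → ℕ} (hf : IsRDF G f) :
    ∑ v, f v = #{v | f v = 1} + 2 * #{v | f v = 2} := by
  have hsplit : ∀ v, f v = (if f v = 1 then 1 else 0) + (if f v = 2 then 2 else 0) := by
    intro v
    have := hf.1 v
    interval_cases f v <;> simp
  rw [sum_congr rfl fun v _ => hsplit v, sum_add_distrib, sum_ite, sum_ite]
  simp [mul_comm]

theorem IsRDF.isDominatingSet [DecidableEq V] {f : V → ℕ} (hf : IsRDF G f) :
    IsDominatingSet G ↑(univ.filter (f · = 1) ∪ univ.filter (f · = 2)) := by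
  intro v hv
  have hv0 : f v = 0 := by
    simp only [coe_union, coe_filter, mem_univ, true_and, Set.mem_union, Set.mem_ofPred_eq,
      not_or] at hv
    have := hf.1 v
    omega
  obtain ⟨u, hadj, hu⟩ := hf.2 v hv0
  exact ⟨u, by simp [hu], hadj⟩

theorem IsRDF.domNum_le {f : V → ℕ} (hf : IsRDF G f) :
    domNum G ≤ #{v | f v = 1} + #{v | f v = 2} := by
  classical
  exact (domNum_le_card_of_isDominatingSet G hf.isDominatingSet).trans (card_union_le _ _)

end Domination

section BoxProd

variable {V W : Type*} {G : SimpleGraph V} {H : SimpleGraph W}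

def boxProdRDF [DecidableEq V] (D : Finset V) (f : W → ℕ) (p : V × W) : ℕ :=
  if f p.2 = 2 ∨ (f p.2 = 1 ∧ p.1 ∈ D) then 2 else 0

theorem isRDF_boxProdRDF [DecidableEq V] {D : Finset V} (hD : IsDominatingSet G ↑D)
    {f : W → ℕ} (hf : IsRDF H f) :
    IsRDF (G.boxProd H) (boxProdRDF D f) := by
  refine ⟨fun p => by unfold boxProdRDF; split_ifs <;> omega, ?_⟩
  rintro ⟨u, w⟩ hzero
  simp only [boxProdRDF, ite_eq_right_iff, OfNat.ofNat_ne_zero, imp_false, not_or] at hzero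
  obtain ⟨hw2, hw1⟩ := hzero
  by_cases hw : f w = 1
  · obtain ⟨u', hu'D, hadj⟩ := hD u fun hu => hw1 ⟨hw, hu⟩
    exact ⟨(u', w), Or.inl ⟨hadj, rfl⟩, by simp [boxProdRDF, hw, mem_coe.mp hu'D]⟩
  · obtain ⟨w', hadj, hw'⟩ := hf.2 w (by have := hf.1 w; omega)
    exact ⟨(u, w'), Or.inr ⟨hadj, rfl⟩, by simp [boxProdRDF, hw']⟩

theorem sum_boxProdRDF [Fintype V] [Fintype W] [DecidableEq V] (D : Finset V) (f : W → ℕ) :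
    ∑ p, boxProdRDF D f p =
      2 * Fintype.card V * #{w | f w = 2} + 2 * D.card * #{w | f w = 1} := by
  classical
  set A := univ.filter (f · = 1)
  set B := univ.filter (f · = 2)
  have hsupp : univ.filter (fun p : V × W => f p.2 = 2 ∨ (f p.2 = 1 ∧ p.1 ∈ D)) =
      univ ×ˢ B ∪ D ×ˢ A := by
    ext ⟨u, w⟩
    simp [A, B, and_comm]
  have hdisj : Disjoint (univ ×ˢ B) (D ×ˢ A) := by
    simp only [disjoint_left, mem_product, mem_filter, A, B]
    omega
  unfold boxProdRDF
  rw [sum_ite, sum_const_zero, add_zero, sum_const, smul_eq_mul, hsupp,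
    card_union_of_disjoint hdisj, card_product, card_product, card_univ]
  ring

theorem romanDomNum_boxProd_le [Fintype V] [Fintype W] {D : Finset V}
    (hD : IsDominatingSet G ↑D) {f : W → ℕ} (hf : IsRDF H f) :
    romanDomNum (G.boxProd H) ≤
      2 * Fintype.card V * #{w | f w = 2} + 2 * D.card * #{w | f w = 1} := by
  classical
  rw [← sum_boxProdRDF]
  exact romanDomNum_le_sum _ (isRDF_boxProdRDF hD hf)

end BoxProd

theorem stmt14 {V W : Type*} [Fintype V] [Fintype W]
    (G : SimpleGraph V) (H : SimpleGraph W)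
    (hRoman : romanDomNum G = 2 * domNum G) :
    (romanDomNum (G.boxProd H) : ℤ) ≤
      2 * Fintype.card V * ((romanDomNum H : ℤ) - domNum H) +
        2 * domNum G * (2 * (domNum H : ℤ) - romanDomNum H) := by
  obtain ⟨f, hf, hfsum⟩ := exists_isRDF_sum_eq_romanDomNum H
  obtain ⟨D, hD, hDcard⟩ := exists_isDominatingSet_card_eq_domNum G
  have hprod := romanDomNum_boxProd_le hD hf
  have hweight := hf.sum_eq
  have hdomH := hf.domNum_le
  have hdomG := two_mul_domNum_le_card_of_roman G hRoman
  rw [hDcard] at hprod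
  rw [hfsum] at hweight
  set a := #{w | f w = 1}
  set b := #{w | f w = 2}
  have hgap : (0 : ℤ) ≤ (Fintype.card V - 2 * domNum G) * (a + b - domNum H) :=
    mul_nonneg (by omega) (by omega)
  push_cast [hweight]
  nlinarith
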